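/- A pointed unital quantum B-algebra (X, ≤, →, ⇝, d, u) is weakly involutive if and only if for all x, y: x⁻ ≤ y implies y˜ ≤ x, and x˜ ≤ y implies y⁻ ≤ x. -/

import Mathlib

class QuantumBAlgebra (X : Type*) extends PartialOrder X where
  arr : X → X → X
  sq : X → X → X
  qb1 : ∀ x y z : X, arr y z ≤ arr (arr x y) (arr x z)
  qb2 : ∀ x y z : X, sq y z ≤ arr (sq x y) (sq x z)
  qb3 : ∀ x y z : X, y ≤ z → arr x y ≤ arr x z
  qb4 : ∀ x y z : X, x ≤ arr y z ↔ y ≤ sq x z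

open QuantumBAlgebra

/-! By (QB4), `x ↦ x → d` and `x ↦ x ⇝ d` form an antitone Galois connection, so both
double negations are inflationary and both negations are antitone. The reverse inequality
`x⁻˜ ≤ x` is the contraposition applied to `x⁻ ≤ x⁻`. -/

namespace QuantumBAlgebra

variable {X : Type*} [QuantumBAlgebra X] (d : X)

theorem le_sq_arr (x : X) : x ≤ sq (arr x d) d :=
  (qb4 (arr x d) x d).mp le_rfl

theorem le_arr_sq (x : X) : x ≤ arr (sq x d) d :=
  (qb4 x (sq x d) d).mpr le_rfl

theorem antitone_arr : Antitone (arr · d : X → X) := fun _ b hab =>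
  (qb4 (arr b d) _ d).mpr (hab.trans (le_sq_arr d b))

theorem antitone_sq : Antitone (sq · d : X → X) := fun _ b hab =>
  (qb4 _ (sq b d) d).mp (hab.trans (le_arr_sq d b))

end QuantumBAlgebra

theorem stmt16_general {X : Type*} [QuantumBAlgebra X] (d : X) :
    (∀ x : X, sq (arr x d) d = x ∧ arr (sq x d) d = x) ↔
    (∀ x y : X, (arr x d ≤ y → sq y d ≤ x) ∧ (sq x d ≤ y → arr y d ≤ x)) := by
  constructor
  · intro hinv x y
    exact ⟨fun h => (hinv x).1 ▸ antitone_sq d h, fun h => (hinv x).2 ▸ antitone_arr d h⟩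
  · intro hcontra x
    exact ⟨((hcontra x _).1 le_rfl).antisymm (le_sq_arr d x),
      ((hcontra x _).2 le_rfl).antisymm (le_arr_sq d x)⟩

theorem stmt16 {X : Type*} [QuantumBAlgebra X] (d u : X)
    (hu : ∀ x : X, arr u x = x ∧ sq u x = x) :
    (∀ x : X, sq (arr x d) d = x ∧ arr (sq x d) d = x) ↔
    (∀ x y : X, (arr x d ≤ y → sq y d ≤ x) ∧ (sq x d ≤ y → arr y d ≤ x)) :=
  stmt16_general d
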